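/- Let p ∈ (1,∞) and p' = p/(p−1). There exist constants c, C > 0 depending only on p such that for all δ ≥ 0 and all t ≥ 0 the convex conjugate of φ satisfies c·(δ^{p−1} + t)^{p'−2} t² ≤ φ*(t) ≤ C·(δ^{p−1} + t)^{p'−2} t². Moreover there exists K depending only on p such that φ*(2t) ≤ K·φ*(t) for all δ ≥ 0 and t ≥ 0 (with Δ₂(φ*) ≤ c·2^{max{2,p'}}). -/

import Mathlib

/-- The N-function `φ = φ_{p,δ}`, `φ(t) = ∫₀ᵗ (δ+s)^(p-2)·s ds`. -/
noncomputable def phiFun (p δ t : ℝ) : ℝ := ∫ s in (0:ℝ)..t, (δ + s) ^ (p - 2) * s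

/-- The convex conjugate of an N-function: `ψ*(s) = sup_{t ≥ 0} (s·t − ψ(t))`. -/
noncomputable def conjFun (ψ : ℝ → ℝ) (s : ℝ) : ℝ :=
  sSup ((fun t => s * t - ψ t) '' Set.Ici 0)

/-!
Since `φ'` is increasing, `(t/2)·φ'(t/2) ≤ φ(t) ≤ t·φ'(t)`, and dilating by `k ≥ 1` multiplies
`φ'` by at least `k^{min(1,p-1)}`. The point `t₀ = (δ^{p-1}+s)^{p'-2}·s` is an approximate inverse
of `φ'` at `s`: with `D = (δ^{p-1}+s)^{1/(p-1)}` one has `t₀ = D^{2-p}·s` and `δ + t₀ ≍ D`, so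
`φ'(t₀) = ((δ+t₀)/D)^{p-2}·s ≍ s`. Hence `s·t - φ(t) ≤ 0` beyond a fixed multiple of `t₀`, which
gives `φ*(s) ≲ s·t₀`, while testing `t = t₀/μ` for a large fixed `μ` gives `φ*(s) ≳ s·t₀`.
Since `s·t₀ = (δ^{p-1}+s)^{p'-2}·s²`, the `Δ₂` bound follows from the two-sided estimate.
-/

open Real Set Filter

section Conjugate

variable {ψ : ℝ → ℝ} {s B : ℝ}

theorem le_conjFun_of_forall_le (hB : ∀ t, 0 ≤ t → s * t - ψ t ≤ B) {t : ℝ} (ht : 0 ≤ t) :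
    s * t - ψ t ≤ conjFun ψ s :=
  le_csSup ⟨B, by rintro _ ⟨u, hu, rfl⟩; exact hB u hu⟩ ⟨t, ht, rfl⟩

theorem conjFun_le_of_forall_le (hB : ∀ t, 0 ≤ t → s * t - ψ t ≤ B) : conjFun ψ s ≤ B :=
  csSup_le (nonempty_Ici.image _) (by rintro _ ⟨u, hu, rfl⟩; exact hB u hu)

theorem mul_sub_le_mul_of_forall_le {T : ℝ} (hs : 0 ≤ s) (hT : 0 ≤ T)
    (hψ : ∀ t, 0 ≤ t → 0 ≤ ψ t) (hψT : ∀ t, T ≤ t → s * t ≤ ψ t) {t : ℝ} (ht : 0 ≤ t) :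
    s * t - ψ t ≤ s * T := by
  rcases le_total t T with htT | hTt
  · nlinarith [hψ t ht, mul_le_mul_of_nonneg_left htT hs]
  · nlinarith [hψT t hTt, mul_nonneg hs hT]

end Conjugate

theorem exists_one_le_and_le_rpow {r : ℝ} (hr : 0 < r) (x : ℝ) : ∃ μ : ℝ, 1 ≤ μ ∧ x ≤ μ ^ r :=
  ((eventually_ge_atTop 1).and ((tendsto_rpow_atTop hr).eventually_ge_atTop x)).exists

theorem min_rpow_le_rpow_and_rpow_le_max {a b x : ℝ} (q : ℝ) (ha : 0 < a) (hax : a ≤ x)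
    (hxb : x ≤ b) : min (a ^ q) (b ^ q) ≤ x ^ q ∧ x ^ q ≤ max (a ^ q) (b ^ q) := by
  rcases le_total 0 q with hq | hq
  · exact ⟨(min_le_left _ _).trans (rpow_le_rpow ha.le hax hq),
      (rpow_le_rpow (ha.le.trans hax) hxb hq).trans (le_max_right _ _)⟩
  · exact ⟨(min_le_right _ _).trans (rpow_le_rpow_of_nonpos (ha.trans_le hax) hxb hq),
      (rpow_le_rpow_of_nonpos ha hax hq).trans (le_max_left _ _)⟩

theorem add_two_mul_rpow_mul_sq_le {a t : ℝ} (e : ℝ) (ha : 0 ≤ a) (ht : 0 ≤ t) :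
    (a + 2 * t) ^ e * (2 * t) ^ 2 ≤ 2 ^ max 2 (e + 2) * ((a + t) ^ e * t ^ 2) := by
  rcases ht.eq_or_lt with rfl | ht
  · simp
  have hat : 0 < a + t := by linarith
  have hbase : (a + 2 * t) ^ e ≤ 2 ^ max 0 e * (a + t) ^ e := by
    rcases le_total 0 e with he | he
    · rw [max_eq_right he, ← mul_rpow zero_le_two hat.le]
      exact rpow_le_rpow (by linarith) (by linarith) he
    · rw [max_eq_left he, rpow_zero, one_mul]
      exact rpow_le_rpow_of_nonpos hat (by linarith) he
  have htwo : (2 : ℝ) ^ max 2 (e + 2) = 2 ^ max 0 e * 4 := by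
    rw [show max 2 (e + 2) = max 0 e + 2 by rw [← max_add_add_right, zero_add],
      rpow_add two_pos, rpow_two]
    norm_num
  rw [htwo]
  calc (a + 2 * t) ^ e * (2 * t) ^ 2 = (a + 2 * t) ^ e * (4 * t ^ 2) := by ring
    _ ≤ 2 ^ max 0 e * (a + t) ^ e * (4 * t ^ 2) := by gcongr
    _ = 2 ^ max 0 e * 4 * ((a + t) ^ e * t ^ 2) := by ring

noncomputable def phiDeriv (p δ t : ℝ) : ℝ := (δ + t) ^ (p - 2) * t

section Phi

variable {p δ : ℝ}

theorem phiDeriv_nonneg (hδ : 0 ≤ δ) {t : ℝ} (ht : 0 ≤ t) : 0 ≤ phiDeriv p δ t := by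
  unfold phiDeriv
  positivity

theorem rpow_mul_phiDeriv_le_phiDeriv_mul (hδ : 0 ≤ δ) {k t : ℝ} (hk : 1 ≤ k)
    (ht : 0 ≤ t) : k ^ min 1 (p - 1) * phiDeriv p δ t ≤ phiDeriv p δ (k * t) := by
  rcases ht.eq_or_lt with rfl | ht
  · simp [phiDeriv]
  have hk0 : 0 < k := by linarith
  unfold phiDeriv
  rcases le_total 2 p with hp2 | hp2
  · rw [min_eq_left (by linarith), rpow_one]
    have hbase : (δ + t) ^ (p - 2) ≤ (δ + k * t) ^ (p - 2) :=
      rpow_le_rpow (by positivity) (by nlinarith) (by linarith)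
    calc k * ((δ + t) ^ (p - 2) * t) = (δ + t) ^ (p - 2) * (k * t) := by ring
      _ ≤ (δ + k * t) ^ (p - 2) * (k * t) := by gcongr
  · rw [min_eq_right (by linarith)]
    have hbase : (k * (δ + t)) ^ (p - 2) ≤ (δ + k * t) ^ (p - 2) :=
      rpow_le_rpow_of_nonpos (by positivity) (by nlinarith) (by linarith)
    calc k ^ (p - 1) * ((δ + t) ^ (p - 2) * t) = (k * (δ + t)) ^ (p - 2) * (k * t) := by
          rw [mul_rpow hk0.le (by positivity), show p - 1 = p - 2 + 1 by ring,
            rpow_add_one hk0.ne']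
          ring
      _ ≤ (δ + k * t) ^ (p - 2) * (k * t) := by gcongr

theorem phiDeriv_monotoneOn (hp : 1 ≤ p) (hδ : 0 ≤ δ) : MonotoneOn (phiDeriv p δ) (Ici 0) := by
  intro t ht u hu htu
  rcases (mem_Ici.mp ht).eq_or_lt with rfl | ht0
  · simpa [phiDeriv] using phiDeriv_nonneg (p := p) hδ hu
  have hgrowth := rpow_mul_phiDeriv_le_phiDeriv_mul (p := p) hδ ((one_le_div ht0).mpr htu) ht0.le
  rw [div_mul_cancel₀ _ ht0.ne'] at hgrowth
  refine le_trans (le_mul_of_one_le_left (phiDeriv_nonneg hδ ht0.le) ?_) hgrowth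
  exact one_le_rpow ((one_le_div ht0).mpr htu) (le_min zero_le_one (by linarith))

theorem intervalIntegrable_phiDeriv (hp : 1 ≤ p) (hδ : 0 ≤ δ) {a b : ℝ} (ha : 0 ≤ a)
    (hb : 0 ≤ b) : IntervalIntegrable (phiDeriv p δ) MeasureTheory.volume a b :=
  ((phiDeriv_monotoneOn hp hδ).mono fun _ hx => le_trans (le_inf ha hb) hx.1).intervalIntegrable

theorem phiFun_nonneg (hδ : 0 ≤ δ) {t : ℝ} (ht : 0 ≤ t) : 0 ≤ phiFun p δ t :=
  intervalIntegral.integral_nonneg ht fun _ hs => phiDeriv_nonneg hδ hs.1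

theorem phiFun_le_mul_phiDeriv (hp : 1 ≤ p) (hδ : 0 ≤ δ) {t : ℝ} (ht : 0 ≤ t) :
    phiFun p δ t ≤ t * phiDeriv p δ t := by
  calc phiFun p δ t ≤ ∫ _ in (0:ℝ)..t, phiDeriv p δ t :=
        intervalIntegral.integral_mono_on ht (intervalIntegrable_phiDeriv hp hδ le_rfl ht)
          intervalIntegrable_const fun u hu => phiDeriv_monotoneOn hp hδ hu.1 ht hu.2
    _ = t * phiDeriv p δ t := by simp

theorem half_mul_phiDeriv_half_le_phiFun (hp : 1 ≤ p) (hδ : 0 ≤ δ) {t : ℝ} (ht : 0 ≤ t) :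
    t / 2 * phiDeriv p δ (t / 2) ≤ phiFun p δ t := by
  have ht2 : 0 ≤ t / 2 := by linarith
  calc t / 2 * phiDeriv p δ (t / 2) = ∫ _ in (t / 2)..t, phiDeriv p δ (t / 2) := by
        simp only [intervalIntegral.integral_const, smul_eq_mul]
        ring
    _ ≤ ∫ u in (t / 2)..t, phiDeriv p δ u :=
        intervalIntegral.integral_mono_on (by linarith) intervalIntegrable_const
          (intervalIntegrable_phiDeriv hp hδ ht2 ht)
          fun u hu => phiDeriv_monotoneOn hp hδ ht2 (ht2.trans hu.1) hu.1
    _ ≤ (∫ u in (0:ℝ)..(t / 2), phiDeriv p δ u) + ∫ u in (t / 2)..t, phiDeriv p δ u :=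
        le_add_of_nonneg_left (intervalIntegral.integral_nonneg ht2
          fun _ hu => phiDeriv_nonneg hδ hu.1)
    _ = phiFun p δ t :=
        intervalIntegral.integral_add_adjacent_intervals
          (intervalIntegrable_phiDeriv hp hδ le_rfl ht2) (intervalIntegrable_phiDeriv hp hδ ht2 ht)

end Phi

noncomputable def phiDerivInvApprox (p δ s : ℝ) : ℝ := (δ ^ (p - 1) + s) ^ (p / (p - 1) - 2) * s

section Approx

variable {p δ : ℝ}

theorem phiDerivInvApprox_nonneg (hδ : 0 ≤ δ) {s : ℝ} (hs : 0 ≤ s) :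
    0 ≤ phiDerivInvApprox p δ s := by
  unfold phiDerivInvApprox
  positivity

theorem phiDerivInvApprox_eq (hp : 1 < p) (hδ : 0 ≤ δ) {s : ℝ} (hs : 0 ≤ s) :
    phiDerivInvApprox p δ s = ((δ ^ (p - 1) + s) ^ (p - 1)⁻¹) ^ (2 - p) * s := by
  have hp1 : p - 1 ≠ 0 := by linarith
  rw [phiDerivInvApprox, ← rpow_mul (by positivity)]
  congr 2
  field_simp
  ring

theorem phiDeriv_rpow_mul {D s : ℝ} (hδ : 0 ≤ δ) (hs : 0 ≤ s) (hD : 0 < D) :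
    phiDeriv p δ (D ^ (2 - p) * s) = ((δ + D ^ (2 - p) * s) / D) ^ (p - 2) * s := by
  rw [phiDeriv, div_rpow (by positivity) hD.le, show 2 - p = -(p - 2) by ring, rpow_neg hD.le]
  field_simp

theorem add_rpow_mul_mem_Icc (hp : 1 < p) (hδ : 0 ≤ δ) {s D : ℝ} (hs : 0 ≤ s) (hD : 0 < D)
    (hDp : D ^ (p - 1) = δ ^ (p - 1) + s) :
    δ + D ^ (2 - p) * s ∈ Icc (min (1 / 2) ((1 / 2) ^ (p - 1)⁻¹) * D) (2 * D) := by
  have hq : 0 < p - 1 := by linarith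
  have hDD : D ^ (2 - p) * D ^ (p - 1) = D := by
    rw [← rpow_add hD, show 2 - p + (p - 1) = 1 by ring, rpow_one]
  have hδq : 0 ≤ δ ^ (p - 1) := rpow_nonneg hδ _
  have hDpos : 0 < D ^ (2 - p) := rpow_pos_of_pos hD _
  have hδD : δ ≤ D := (rpow_le_rpow_iff hδ hD.le hq).mp (by linarith)
  have ht0D : D ^ (2 - p) * s ≤ D := by
    calc D ^ (2 - p) * s ≤ D ^ (2 - p) * D ^ (p - 1) := by gcongr; linarith
      _ = D := hDD
  refine ⟨?_, by linarith⟩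
  rcases le_total s (δ ^ (p - 1)) with hsδ | hδs
  · have hhalf : (1 / 2) ^ (p - 1)⁻¹ * D ≤ δ := by
      refine (rpow_le_rpow_iff (by positivity) hδ hq).mp ?_
      rw [mul_rpow (by positivity) hD.le, rpow_inv_rpow (by norm_num) hq.ne', hDp]
      linarith
    have hκD := mul_le_mul_of_nonneg_right (min_le_right (1 / 2 : ℝ) ((1 / 2) ^ (p - 1)⁻¹)) hD.le
    nlinarith [mul_nonneg hDpos.le hs]
  · have hhalf : D / 2 ≤ D ^ (2 - p) * s := by
      nlinarith [mul_le_mul_of_nonneg_left (show D ^ (p - 1) ≤ 2 * s by linarith) hDpos.le]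
    have hκD := mul_le_mul_of_nonneg_right (min_le_left (1 / 2 : ℝ) ((1 / 2) ^ (p - 1)⁻¹)) hD.le
    linarith

theorem exists_phiDeriv_phiDerivInvApprox_bounds (hp : 1 < p) :
    ∃ c C : ℝ, 0 < c ∧ ∀ δ, 0 ≤ δ → ∀ s, 0 ≤ s →
      c * s ≤ phiDeriv p δ (phiDerivInvApprox p δ s) ∧
        phiDeriv p δ (phiDerivInvApprox p δ s) ≤ C * s := by
  set κ : ℝ := min (1 / 2) ((1 / 2) ^ (p - 1)⁻¹)
  have hκ : 0 < κ := lt_min (by norm_num) (by positivity)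
  refine ⟨min (κ ^ (p - 2)) (2 ^ (p - 2)), max (κ ^ (p - 2)) (2 ^ (p - 2)),
    lt_min (by positivity) (by positivity), fun δ hδ s hs => ?_⟩
  rcases hs.eq_or_lt with rfl | hs
  · simp [phiDerivInvApprox, phiDeriv]
  set D := (δ ^ (p - 1) + s) ^ (p - 1)⁻¹
  have hA : 0 < δ ^ (p - 1) + s := by positivity
  have hD : 0 < D := rpow_pos_of_pos hA _
  have hDp : D ^ (p - 1) = δ ^ (p - 1) + s := rpow_inv_rpow hA.le (by linarith)
  rw [phiDerivInvApprox_eq hp hδ hs.le, phiDeriv_rpow_mul hδ hs.le hD]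
  obtain ⟨hlow, hup⟩ := add_rpow_mul_mem_Icc hp hδ hs.le hD hDp
  obtain ⟨hmin, hmax⟩ := min_rpow_le_rpow_and_rpow_le_max (p - 2) hκ
    ((le_div_iff₀ hD).mpr hlow) ((div_le_iff₀ hD).mpr hup)
  exact ⟨mul_le_mul_of_nonneg_right hmin hs.le, mul_le_mul_of_nonneg_right hmax hs.le⟩

end Approx

section PhiConjugate

variable {p : ℝ}

theorem exists_mul_sub_phiFun_le (hp : 1 < p) :
    ∃ C : ℝ, 0 < C ∧ ∀ δ, 0 ≤ δ → ∀ s, 0 ≤ s → ∀ t, 0 ≤ t →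
      s * t - phiFun p δ t ≤ C * (s * phiDerivInvApprox p δ s) := by
  obtain ⟨c, _, hc, hcomp⟩ := exists_phiDeriv_phiDerivInvApprox_bounds hp
  obtain ⟨μ, hμ1, hμ⟩ := exists_one_le_and_le_rpow (lt_min one_pos (sub_pos.mpr hp)) (2 / c)
  refine ⟨2 * μ, by positivity, fun δ hδ s hs t ht => ?_⟩
  set t₀ := phiDerivInvApprox p δ s
  have ht₀ : 0 ≤ t₀ := phiDerivInvApprox_nonneg hδ hs
  have hlarge : ∀ t, 2 * μ * t₀ ≤ t → s * t ≤ phiFun p δ t := by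
    intro t ht
    have ht' : 0 ≤ t := le_trans (by positivity) ht
    have hgrowth : 2 * s ≤ phiDeriv p δ (t / 2) :=
      calc 2 * s = 2 / c * (c * s) := by field_simp
        _ ≤ μ ^ min 1 (p - 1) * phiDeriv p δ t₀ :=
            mul_le_mul hμ (hcomp δ hδ s hs).1 (by positivity) (by positivity)
        _ ≤ phiDeriv p δ (μ * t₀) := rpow_mul_phiDeriv_le_phiDeriv_mul hδ hμ1 ht₀
        _ ≤ phiDeriv p δ (t / 2) :=
            phiDeriv_monotoneOn hp.le hδ (mem_Ici.mpr (by positivity)) (mem_Ici.mpr (by positivity))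
              (by linarith)
    calc s * t = t / 2 * (2 * s) := by ring
      _ ≤ t / 2 * phiDeriv p δ (t / 2) := by gcongr
      _ ≤ phiFun p δ t := half_mul_phiDeriv_half_le_phiFun hp.le hδ ht'
  calc s * t - phiFun p δ t ≤ s * (2 * μ * t₀) :=
        mul_sub_le_mul_of_forall_le hs (by positivity) (fun _ hu => phiFun_nonneg hδ hu) hlarge ht
    _ = 2 * μ * (s * t₀) := by ring

theorem exists_mul_phiDerivInvApprox_le_conjFun (hp : 1 < p) :
    ∃ c : ℝ, 0 < c ∧ ∀ δ, 0 ≤ δ → ∀ s, 0 ≤ s →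
      c * (s * phiDerivInvApprox p δ s) ≤ conjFun (phiFun p δ) s := by
  obtain ⟨_, C, _, hcomp⟩ := exists_phiDeriv_phiDerivInvApprox_bounds hp
  obtain ⟨B, _, hB⟩ := exists_mul_sub_phiFun_le hp
  obtain ⟨μ, hμ1, hμ⟩ := exists_one_le_and_le_rpow (lt_min one_pos (sub_pos.mpr hp)) (2 * C)
  have hμ0 : 0 < μ := by linarith
  refine ⟨1 / (2 * μ), by positivity, fun δ hδ s hs => ?_⟩
  set t₀ := phiDerivInvApprox p δ s
  have ht₀ : 0 ≤ t₀ := phiDerivInvApprox_nonneg hδ hs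
  set t₁ := t₀ / μ
  have ht₁ : 0 ≤ t₁ := by positivity
  have hsmall : phiDeriv p δ t₁ ≤ s / 2 := by
    have hdil := rpow_mul_phiDeriv_le_phiDeriv_mul (p := p) hδ hμ1 ht₁
    rw [mul_div_cancel₀ _ hμ0.ne'] at hdil
    have hμr : 0 < μ ^ min 1 (p - 1) := by positivity
    nlinarith [(hcomp δ hδ s hs).2, mul_le_mul_of_nonneg_right hμ hs]
  calc 1 / (2 * μ) * (s * t₀) = t₁ * (s - s / 2) := by
        simp only [t₁]
        field_simp
        ring
    _ ≤ t₁ * (s - phiDeriv p δ t₁) := by gcongr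
    _ = s * t₁ - t₁ * phiDeriv p δ t₁ := by ring
    _ ≤ s * t₁ - phiFun p δ t₁ := by linarith [phiFun_le_mul_phiDeriv hp.le hδ ht₁]
    _ ≤ conjFun (phiFun p δ) s := le_conjFun_of_forall_le (hB δ hδ s hs) ht₁

theorem exists_conjFun_phiFun_bounds (hp : 1 < p) :
    ∃ c C : ℝ, 0 < c ∧ 0 < C ∧ ∀ δ, 0 ≤ δ → ∀ t, 0 ≤ t →
      c * ((δ ^ (p - 1) + t) ^ (p / (p - 1) - 2) * t ^ 2) ≤ conjFun (phiFun p δ) t ∧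
        conjFun (phiFun p δ) t ≤ C * ((δ ^ (p - 1) + t) ^ (p / (p - 1) - 2) * t ^ 2) := by
  obtain ⟨c, hc, hlow⟩ := exists_mul_phiDerivInvApprox_le_conjFun hp
  obtain ⟨C, hC, hup⟩ := exists_mul_sub_phiFun_le hp
  refine ⟨c, C, hc, hC, fun δ hδ t ht => ?_⟩
  have hweight : t * phiDerivInvApprox p δ t = (δ ^ (p - 1) + t) ^ (p / (p - 1) - 2) * t ^ 2 := by
    rw [phiDerivInvApprox]
    ring
  rw [← hweight]
  exact ⟨hlow δ hδ t ht, conjFun_le_of_forall_le (hup δ hδ t ht)⟩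

end PhiConjugate

/-- For `p ∈ (1,∞)` and `p' = p/(p−1)` there exist constants `c, C > 0` depending only
on `p` such that for all `δ ≥ 0` and all `t ≥ 0`,
`c·(δ^{p−1}+t)^{p'−2}·t² ≤ φ*(t) ≤ C·(δ^{p−1}+t)^{p'−2}·t²`; moreover there is `K`
depending only on `p` (with `K ≤ c'·2^{max{2,p'}}`) such that `φ*(2t) ≤ K·φ*(t)`. -/
theorem conj_phi_equiv_and_Delta2 (p : ℝ) (hp : 1 < p) :
    ∃ c C K c' : ℝ, 0 < c ∧ 0 < C ∧ 0 < K ∧ 0 < c' ∧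
      K ≤ c' * 2 ^ (max 2 (p / (p - 1))) ∧
      ∀ δ : ℝ, 0 ≤ δ → ∀ t : ℝ, 0 ≤ t →
        (c * (δ ^ (p - 1) + t) ^ (p / (p - 1) - 2) * t ^ 2 ≤ conjFun (phiFun p δ) t ∧
          conjFun (phiFun p δ) t ≤ C * (δ ^ (p - 1) + t) ^ (p / (p - 1) - 2) * t ^ 2) ∧
        conjFun (phiFun p δ) (2 * t) ≤ K * conjFun (phiFun p δ) t := by
  obtain ⟨c, C, hc, hC, hbounds⟩ := exists_conjFun_phiFun_bounds hp
  set M : ℝ := 2 ^ max 2 (p / (p - 1))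
  refine ⟨c, C, C / c * M, C / c, hc, hC, by positivity, by positivity, le_rfl,
    fun δ hδ t ht => ?_⟩
  set w : ℝ → ℝ := fun t => (δ ^ (p - 1) + t) ^ (p / (p - 1) - 2) * t ^ 2
  obtain ⟨hlow, hup⟩ := hbounds δ hδ t ht
  refine ⟨⟨by rwa [mul_assoc], by rwa [mul_assoc]⟩, ?_⟩
  have hdoubling : w (2 * t) ≤ M * w t := by
    simpa only [sub_add_cancel] using
      add_two_mul_rpow_mul_sq_le (p / (p - 1) - 2) (rpow_nonneg hδ (p - 1)) ht
  calc conjFun (phiFun p δ) (2 * t) ≤ C * w (2 * t) := (hbounds δ hδ (2 * t) (by positivity)).2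
    _ ≤ C * (M * w t) := by gcongr
    _ = C / c * M * (c * w t) := by field_simp
    _ ≤ C / c * M * conjFun (phiFun p δ) t := by gcongr
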